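/- arXiv:1402.6025 — 2 statements merged into one kernel-verified Lean document; each statement's English description precedes it below -/
import Mathlib

section
/- For any s ≥ 0, μ > 0, ν > 0, the equation 2ζ² log((ζ − μ)/ν) = s has a unique solution ζ in the interval [μ + ν, ∞). -/
/-!
On `[μ + ν, ∞)` the left-hand side `2 ζ² log ((ζ - μ) / ν)` is the product of the positive,
strictly increasing factor `2 ζ²` with the nonnegative, strictly increasing factor
`log ((ζ - μ) / ν)`, so it is strictly increasing there. It vanishes at `ζ = μ + ν`, is continuous,
and tends to `∞`, so by the intermediate value theorem it takes every value `s ≥ 0` exactly once.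
-/

open Real Set Filter

noncomputable def canonicalDual (μ ν ζ : ℝ) : ℝ :=
  2 * ζ ^ 2 * log ((ζ - μ) / ν)

section canonicalDual

variable {μ ν : ℝ}

lemma canonicalDual_add_self (hν : ν ≠ 0) : canonicalDual μ ν (μ + ν) = 0 := by
  simp [canonicalDual, hν]

lemma continuousOn_canonicalDual (hν : 0 < ν) :
    ContinuousOn (canonicalDual μ ν) (Ici (μ + ν)) := by
  refine continuousOn_const.mul (continuousOn_pow 2) |>.mul (ContinuousOn.log (by fun_prop) ?_)
  intro ζ hζ
  have : μ < ζ := by linarith [mem_Ici.1 hζ]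
  exact (div_pos (sub_pos.2 this) hν).ne'

lemma tendsto_canonicalDual_atTop (hν : 0 < ν) :
    Tendsto (canonicalDual μ ν) atTop atTop := by
  have hsq : Tendsto (fun ζ : ℝ ↦ 2 * ζ ^ 2) atTop atTop :=
    (tendsto_pow_atTop two_ne_zero).const_mul_atTop two_pos
  have hlog : Tendsto (fun ζ : ℝ ↦ log ((ζ - μ) / ν)) atTop atTop :=
    tendsto_log_atTop.comp ((tendsto_atTop_add_const_right _ (-μ) tendsto_id).atTop_div_const hν)
  exact hsq.atTop_mul_atTop₀ hlog

lemma strictMonoOn_canonicalDual (hμν : 0 ≤ μ + ν) (hν : 0 < ν) :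
    StrictMonoOn (canonicalDual μ ν) (Ici (μ + ν)) := by
  intro x hx y hy hxy
  have hx₀ : 0 ≤ x := hμν.trans hx
  have hxμ : 0 < (x - μ) / ν := div_pos (by linarith [mem_Ici.1 hx]) hν
  have hsq : 2 * x ^ 2 < 2 * y ^ 2 := by gcongr
  have hlog : log ((x - μ) / ν) < log ((y - μ) / ν) := log_lt_log hxμ (by gcongr)
  have hlog₀ : 0 ≤ log ((x - μ) / ν) :=
    log_nonneg ((le_div_iff₀ hν).2 (by linarith [mem_Ici.1 hx]))
  exact mul_lt_mul'' hsq hlog (by positivity) hlog₀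

end canonicalDual

theorem stmt_5 (μ ν s : ℝ) (hμ : 0 < μ) (hν : 0 < ν) (hs : 0 ≤ s) :
    ∃! ζ : ℝ, ζ ∈ Ici (μ + ν) ∧ 2 * ζ^2 * Real.log ((ζ - μ)/ν) = s := by
  have hs' : s ∈ Ici (canonicalDual μ ν (μ + ν)) := by
    rwa [canonicalDual_add_self hν.ne', mem_Ici]
  obtain ⟨ζ, hζ, rfl⟩ :=
    intermediate_value_Ici (continuousOn_canonicalDual hν) (tendsto_canonicalDual_atTop hν) hs'
  refine ⟨ζ, ⟨hζ, rfl⟩, fun y ⟨hy, hyζ⟩ ↦ ?_⟩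
  exact (strictMonoOn_canonicalDual (by linarith) hν).injOn hy hζ hyζ
end

section
/- For μ > 0, b > 0, p ≥ 1/2 and ε ≤ 0, the power-law stored energy W(γ) = (μ/(2b))[(1 + (b/p)(|γ|² − ε))^p − 1] is a convex function on ℝ². -/
open Real Set

/-!
Write `k = 1 - (b/p) ε ≥ 0`. Then `√(k + (b/p)|γ|²)` is the Euclidean norm of `(√k, √(b/p) γ)`,
an affine function of `γ`, hence convex; `W` is a positive multiple of its `2p`-th power minus a
constant, and `t ↦ t ^ (2p)` is convex and monotone on `[0, ∞)` because `2p ≥ 1`.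
-/

theorem ConvexOn.comp_of_mapsTo {𝕜 E α β : Type*} [Semiring 𝕜] [PartialOrder 𝕜]
    [AddCommMonoid E] [AddCommMonoid α] [PartialOrder α] [AddCommMonoid β] [PartialOrder β]
    [SMul 𝕜 E] [SMul 𝕜 α] [SMul 𝕜 β] {s : Set E} {t : Set β} {f : E → β} {g : β → α}
    (hg : ConvexOn 𝕜 t g) (hf : ConvexOn 𝕜 s f) (hg' : MonotoneOn g t) (hst : MapsTo f s t) :
    ConvexOn 𝕜 s (g ∘ f) :=
  ⟨hf.1, fun _ hx _ hy _ _ ha hb hab =>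
    (hg' (hst (hf.1 hx hy ha hb hab)) (hg.1 (hst hx) (hst hy) ha hb hab)
      (hf.2 hx hy ha hb hab)).trans (hg.2 (hst hx) (hst hy) ha hb hab)⟩

section

variable {E : Type*} [SeminormedAddCommGroup E] [NormedSpace ℝ E]

theorem convexOn_sqrt_add_mul_sq_norm {k a : ℝ} (hk : 0 ≤ k) (ha : 0 ≤ a) :
    ConvexOn ℝ univ (fun x : E => √(k + a * ‖x‖ ^ 2)) := by
  let f : E →ᵃ[ℝ] WithLp 2 (ℝ × E) :=
    (WithLp.linearEquiv 2 ℝ (ℝ × E)).symm.toLinearMap.toAffineMap.comp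
      (AffineMap.const ℝ E ((√k, 0) : ℝ × E) + (√a • LinearMap.inr ℝ ℝ E).toAffineMap)
  refine (convexOn_univ_norm.comp_affineMap f).congr fun x _ => ?_
  simp [f, WithLp.prod_norm_eq_of_L2, norm_smul, mul_pow, sq_sqrt hk, sq_sqrt ha]

theorem convexOn_rpow_add_mul_sq_norm {k a p : ℝ} (hk : 0 ≤ k) (ha : 0 ≤ a) (hp : 1 / 2 ≤ p) :
    ConvexOn ℝ univ (fun x : E => (k + a * ‖x‖ ^ 2) ^ p) := by
  have h2p : 1 ≤ 2 * p := by linarith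
  refine ((convexOn_rpow h2p).comp_of_mapsTo (convexOn_sqrt_add_mul_sq_norm hk ha)
    (monotoneOn_rpow_Ici_of_exponent_nonneg (by linarith)) fun x _ => sqrt_nonneg _).congr
    fun x _ => ?_
  have : 0 ≤ k + a * ‖x‖ ^ 2 := by positivity
  simp only [Function.comp_apply]
  rw [sqrt_eq_rpow, ← rpow_mul this]
  ring_nf

end

theorem stmt_11 (μ b p ε : ℝ) (hμ : 0 < μ) (hb : 0 < b) (hp : (1:ℝ)/2 ≤ p)
    (hε : ε ≤ 0) :
    ConvexOn ℝ Set.univ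
      (fun γ : EuclideanSpace ℝ (Fin 2) =>
        (μ/(2*b)) * ((1 + (b/p) * (‖γ‖^2 - ε)) ^ p - 1)) := by
  have ha : 0 ≤ b / p := div_nonneg hb.le (by linarith)
  have hk : 0 ≤ 1 - b / p * ε := by nlinarith
  have hc : 0 ≤ μ / (2 * b) := by positivity
  refine (((convexOn_rpow_add_mul_sq_norm hk ha hp).add_const (-1)).smul hc).congr
    fun γ _ => ?_
  simp only [smul_eq_mul, Pi.add_apply]
  ring_nf
end
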